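/- Let V be a finite set of vertices, adj a relation on V, ε > 0, and cost a function assigning to every pair (u,v) with adj(u,v) an M-dimensional real vector with every component at least ε. Fix u, v ∈ V and let P denote the set of cost vectors of all walks from u to v. Then the set of elements of P that are non-dominated within P (the Pareto-optimal cost vectors of walks from u to v) is finite. (This shows that the set of cost-unique Pareto-optimal solutions that MOM* must return is finite, even though walks may contain arbitrarily many wait actions.) -/

import Mathlib

/-- `a` dominates `b`: componentwise `a ≤ b`, strictly in at least one component. -/
def Dominates {M : ℕ} (a b : Fin M → ℝ) : Prop :=
  (∀ m, a m ≤ b m) ∧ ∃ m, a m < b m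

/-- The cost vector of a walk represented as a list of vertices: the sum of
the edge cost vectors along consecutive pairs. -/
def walkCost {V : Type*} {M : ℕ} (cost : V → V → Fin M → ℝ) : List V → (Fin M → ℝ)
  | [] => 0
  | [_] => 0
  | a :: b :: rest => cost a b + walkCost cost (b :: rest)

lemma walkCost_ge {V : Type*} {M : ℕ} (adj : V → V → Prop) (ε : ℝ)
    (cost : V → V → Fin M → ℝ)
    (hcost : ∀ a b, adj a b → ∀ m, ε ≤ cost a b m) :
    ∀ L : List V, L.Chain' adj → ∀ m, ((L.length - 1 : ℕ) : ℝ) * ε ≤ walkCost cost L m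
  | [], _, m => by simp [walkCost]
  | [a], _, m => by simp [walkCost]
  | a :: b :: rest, h, m => by
    rw [List.Chain', List.isChain_cons_cons] at h
    have ih := walkCost_ge adj ε cost hcost (b :: rest) h.2 m
    have h1 : ε ≤ cost a b m := hcost a b h.1 m
    have hl : ((a :: b :: rest).length - 1 : ℕ) = ((b :: rest).length - 1 : ℕ) + 1 := by
      simp
    show ((a :: b :: rest).length - 1 : ℕ) * ε ≤ cost a b m + walkCost cost (b :: rest) m
    rw [hl]
    push_cast
    nlinarith

/-- In a finite graph with edge cost components bounded below by `ε > 0`, the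
set of Pareto-optimal (non-dominated) cost vectors of walks from `u` to `v`
is finite. -/
theorem pareto_walk_costs_finite (M : ℕ) (hM : 0 < M)
    (V : Type*) [Fintype V] (adj : V → V → Prop)
    (ε : ℝ) (hε : 0 < ε)
    (cost : V → V → Fin M → ℝ)
    (hcost : ∀ a b, adj a b → ∀ m, ε ≤ cost a b m)
    (u v : V) :
    let P : Set (Fin M → ℝ) := { g | ∃ L : List V, L.head? = some u ∧
      L.getLast? = some v ∧ L.Chain' adj ∧ walkCost cost L = g }
    { g ∈ P | ∀ g' ∈ P, ¬ Dominates g' g }.Finite := by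
  intro P
  by_cases hP : P.Nonempty
  · obtain ⟨g0, hg0⟩ := hP
    have hne : (Finset.univ : Finset (Fin M)).Nonempty := by
      exact ⟨⟨0, hM⟩, Finset.mem_univ _⟩
    set B := Finset.univ.sup' hne g0 with hB
    have hBle : ∀ m, g0 m ≤ B := fun m => Finset.le_sup' g0 (Finset.mem_univ m)
    set N := Nat.ceil (B / ε) with hN
    have hsub : { g ∈ P | ∀ g' ∈ P, ¬ Dominates g' g } ⊆
        insert g0 (walkCost cost '' {L : List V | L.length ≤ N}) := by
      rintro g ⟨hgP, hnd⟩
      by_cases hgg : g = g0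
      · exact Set.mem_insert_iff.mpr (Or.inl hgg)
      · right
        obtain ⟨L, _, _, hch, hLc⟩ := hgP
        -- since g0 does not dominate g and g ≠ g0, some component of g is < g0 m
        have hdom := hnd g0 hg0
        have hex : ∃ m, g m < g0 m := by
          by_contra hc
          push_neg at hc
          exact hdom ⟨hc, by
            by_contra hc2
            push_neg at hc2
            exact hgg (funext fun m => le_antisymm (hc2 m) (hc m))⟩
        obtain ⟨m, hm⟩ := hex
        have hlow : ((L.length - 1 : ℕ) : ℝ) * ε ≤ g m := by
          rw [← hLc]; exact walkCost_ge adj ε cost hcost L hch m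
        have hltB : ((L.length - 1 : ℕ) : ℝ) * ε < B :=
          lt_of_le_of_lt hlow (lt_of_lt_of_le hm (hBle m))
        have h1 : ((L.length - 1 : ℕ) : ℝ) < B / ε := by
          rw [lt_div_iff₀ hε]; exact hltB
        have h2 : L.length - 1 < N := by
          exact Nat.lt_ceil.mpr h1
        have h3 : L.length ≤ N := by omega
        exact ⟨L, h3, hLc⟩
    have hfin : (walkCost cost '' {L : List V | L.length ≤ N}).Finite :=
      (List.finite_length_le V N).image _
    exact (hfin.insert g0).subset hsub
  · have : { g ∈ P | ∀ g' ∈ P, ¬ Dominates g' g } = ∅ := by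
      rw [Set.not_nonempty_iff_eq_empty] at hP
      rw [hP]; simp
    rw [this]; exact Set.finite_empty
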